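/- Assume Maynard's theorem in the following form: for every admissible set of 50 linear polynomials a_k x + 1 (a_k distinct positive integers), there exist two indices i ≠ j such that a_i n + 1 and a_j n + 1 are simultaneously prime for infinitely many n. Then for every d ≥ 1 there exists an h with d | h and h < 49d(48d+1)(49d+1) such that for every l ≥ 1 with gcd(d, l) = 1 there are infinitely many n with φ(d)·φ(n) = φ(d·n) = φ(d·(n + l·h)). -/
import Mathlib

private lemma tot_mul_dvd : ∀ a s : ℕ, 0 < s → a ∣ s → Nat.totient (a * s) = a * Nat.totient s := by
  intro a
  induction a using Nat.strong_induction_on with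
  | _ a ih =>
    intro s hs hdvd
    rcases eq_or_ne a 1 with rfl | hne
    · simp
    · have ha : a ≠ 0 := by rintro rfl; exact absurd (Nat.eq_zero_of_zero_dvd hdvd) hs.ne'
      obtain ⟨p, hp, b, rfl⟩ := Nat.exists_prime_and_dvd hne
      have hb : 0 < b := Nat.pos_of_ne_zero (by rintro rfl; simp at ha)
      have hps : p ∣ s := dvd_trans (Dvd.intro b rfl) hdvd
      have hbs : b ∣ s := dvd_trans (Dvd.intro_left p rfl) hdvd
      have h1 : p * b * s = p * (b * s) := by ring
      have hlt : b < p * b := by nlinarith [hp.two_le]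
      rw [h1, Nat.totient_mul_of_prime_of_dvd hp (hps.mul_left b), ih b hlt s hs hbs]
      ring

private lemma cop_lin (d k : ℕ) : Nat.Coprime d (k * d + 1) := by
  have := (Nat.coprime_add_mul_left_right d 1 k).mpr (Nat.coprime_one_right d)
  rwa [mul_comm, add_comm] at this

private lemma key (d i t : ℕ) (hd : 1 ≤ d) (hj : i + t + 1 ≤ 49)
    (hinf : {m : ℕ | Nat.Prime ((i * d + 1) * m + 1) ∧
      Nat.Prime (((i + t + 1) * d + 1) * m + 1)}.Infinite) :
    ∃ h : ℕ, d ∣ h ∧ h < 49 * d * (48 * d + 1) * (49 * d + 1) ∧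
      ∀ l : ℕ, 1 ≤ l → Nat.Coprime d l →
        {n : ℕ | Nat.totient d * Nat.totient n = Nat.totient (d * n) ∧
          Nat.totient (d * n) = Nat.totient (d * (n + l * h))}.Infinite := by
  set ai := i * d + 1 with hai_def
  set aj := (i + t + 1) * d + 1 with haj_def
  have hai1 : 1 ≤ ai := Nat.le_add_left 1 _
  have haj1 : 1 ≤ aj := Nat.le_add_left 1 _
  refine ⟨(t + 1) * d * ai * aj, ⟨(t + 1) * ai * aj, by ring⟩, ?_, ?_⟩
  · -- bound
    have haiB : ai ≤ 48 * d + 1 := by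
      have : i ≤ 48 := by omega
      simp only [hai_def]; nlinarith
    have hajB : aj ≤ 49 * d + 1 := by
      simp only [haj_def]; nlinarith
    rcases Nat.eq_zero_or_pos i with rfl | hi
    · have : ai = 1 := by simp [hai_def]
      rw [this]
      have h1 : t + 1 ≤ 49 := by omega
      calc (t + 1) * d * 1 * aj ≤ 49 * d * 1 * (49 * d + 1) := by gcongr
        _ < 49 * d * (48 * d + 1) * (49 * d + 1) := by
            have B : 49 * d * 1 < 49 * d * (48 * d + 1) :=
              Nat.mul_lt_mul_of_pos_left (by omega) (by omega)
            exact Nat.mul_lt_mul_of_pos_right B (by omega)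
    · have h1 : t + 1 ≤ 48 := by omega
      calc (t + 1) * d * ai * aj ≤ 48 * d * (48 * d + 1) * (49 * d + 1) := by gcongr
        _ < 49 * d * (48 * d + 1) * (49 * d + 1) := by
            have B : 48 * d * (48 * d + 1) < 49 * d * (48 * d + 1) :=
              Nat.mul_lt_mul_of_pos_right (by omega) (by omega)
            exact Nat.mul_lt_mul_of_pos_right B (by omega)
  · intro l hl hco
    set M := d * l * ai * ai * aj * aj with hM_def
    set f : ℕ → ℕ := fun m => l * ai * ai * aj * (aj * m + 1) with hf_def
    have hinj : Function.Injective f := by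
      intro x y hxy
      have hC : 0 < l * ai * ai * aj := by positivity
      have h2 : aj * x + 1 = aj * y + 1 := Nat.eq_of_mul_eq_mul_left hC hxy
      exact Nat.eq_of_mul_eq_mul_left haj1 (by omega)
    have himg : ((fun m => f m) '' ({m : ℕ | Nat.Prime ((i * d + 1) * m + 1) ∧
        Nat.Prime (((i + t + 1) * d + 1) * m + 1)} \ Set.Iio M)).Infinite :=
      (hinf.diff (Set.finite_Iio M)).image hinj.injOn
    refine Set.Infinite.mono ?_ himg
    rintro _ ⟨m, ⟨⟨hpm, hqm⟩, hmM⟩, rfl⟩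
    have hmge : M ≤ m := not_lt.mp hmM
    rw [← hai_def] at hpm
    rw [← haj_def] at hqm
    set p := ai * m + 1 with hp_def
    set q := aj * m + 1 with hq_def
    have hqgt : m < q := by
      have : m ≤ aj * m := Nat.le_mul_of_pos_left m haj1
      omega
    have hpgt : m < p := by
      have : m ≤ ai * m := Nat.le_mul_of_pos_left m hai1
      omega
    -- sizes
    have hXM : d * l * ai * ai * aj ≤ M := by
      calc d * l * ai * ai * aj = d * l * ai * ai * aj * 1 := by ring
        _ ≤ M := by rw [hM_def]; gcongr
    have hYM : d * l * ai * aj * aj ≤ M := by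
      calc d * l * ai * aj * aj ≤ d * l * ai * aj * aj * ai := Nat.le_mul_of_pos_right _ hai1
        _ = M := by rw [hM_def]; ring
    have hdM : d ≤ M := by
      calc d ≤ d * (l * ai * ai * aj * aj) := Nat.le_mul_of_pos_right d (by positivity)
        _ = M := by rw [hM_def]; ring
    -- coprimalities
    have hcop_q_X : ¬ q ∣ d * l * ai * ai * aj := by
      intro hdvd
      have := Nat.le_of_dvd (by positivity) hdvd
      omega
    have hcop_p_Y : ¬ p ∣ d * l * ai * aj * aj := by
      intro hdvd
      have := Nat.le_of_dvd (by positivity) hdvd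
      omega
    have hcd_ai : Nat.Coprime d ai := cop_lin d i
    have hcd_aj : Nat.Coprime d aj := cop_lin d (i + t + 1)
    have hcd_q : Nat.Coprime d q := by
      have : ¬ q ∣ d := fun hdvd => by have := Nat.le_of_dvd hd hdvd; omega
      exact (hqm.coprime_iff_not_dvd.mpr this).symm
    have hcdn : Nat.Coprime d (f m) := by
      simp only [hf_def]
      exact ((((hco.mul_right hcd_ai).mul_right hcd_ai).mul_right hcd_aj).mul_right hcd_q)
    -- totient computations
    have hs : 0 < d * l * ai * aj := by positivity
    have hφq : Nat.totient q = aj * m := by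
      rw [Nat.totient_prime hqm]; omega
    have hφp : Nat.totient p = ai * m := by
      rw [Nat.totient_prime hpm]; omega
    have hφ1 : Nat.totient (d * f m) = ai * Nat.totient (d * l * ai * aj) * (aj * m) := by
      have e1 : d * f m = (ai * (d * l * ai * aj)) * q := by simp only [hf_def]; ring
      have hc : Nat.Coprime (ai * (d * l * ai * aj)) q := by
        refine (hqm.coprime_iff_not_dvd.mpr ?_).symm
        intro hdvd
        have := Nat.le_of_dvd (by positivity) hdvd
        have e2 : ai * (d * l * ai * aj) = d * l * ai * ai * aj := by ring
        omega
      rw [e1, Nat.totient_mul hc, tot_mul_dvd ai _ hs ⟨d * l * aj, by ring⟩, hφq]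
    have hφ2 : Nat.totient (d * (f m + l * ((t + 1) * d * ai * aj)))
        = aj * Nat.totient (d * l * ai * aj) * (ai * m) := by
      have e1 : d * (f m + l * ((t + 1) * d * ai * aj)) = (aj * (d * l * ai * aj)) * p := by
        simp only [hf_def, hp_def, hai_def, haj_def]; ring
      have hc : Nat.Coprime (aj * (d * l * ai * aj)) p := by
        refine (hpm.coprime_iff_not_dvd.mpr ?_).symm
        intro hdvd
        have := Nat.le_of_dvd (by positivity) hdvd
        have e2 : aj * (d * l * ai * aj) = d * l * ai * aj * aj := by ring
        omega
      rw [e1, Nat.totient_mul hc, tot_mul_dvd aj _ hs ⟨d * l * ai, by ring⟩, hφp]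
    constructor
    · exact (Nat.totient_mul hcdn).symm
    · rw [hφ1, hφ2]; ring

/-- Assuming Maynard's theorem for 50 linear polynomials, for every d ≥ 1 there exists
h with d | h and h < 49d(48d+1)(49d+1) such that for every l ≥ 1 coprime to d there are
infinitely many n with φ(d)·φ(n) = φ(d·n) = φ(d·(n + l·h)). -/
theorem ford_variant
    (maynard : ∀ a : Fin 50 → ℕ, (∀ i, 0 < a i) → Function.Injective a →
      (¬ ∃ p : ℕ, p.Prime ∧ ∀ n : ℕ, p ∣ ∏ i, (a i * n + 1)) →
      ∃ i j : Fin 50, i ≠ j ∧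
        {n : ℕ | Nat.Prime (a i * n + 1) ∧ Nat.Prime (a j * n + 1)}.Infinite) :
    ∀ d : ℕ, 1 ≤ d → ∃ h : ℕ, d ∣ h ∧ h < 49 * d * (48 * d + 1) * (49 * d + 1) ∧
      ∀ l : ℕ, 1 ≤ l → Nat.Coprime d l →
        {n : ℕ | Nat.totient d * Nat.totient n = Nat.totient (d * n) ∧
          Nat.totient (d * n) = Nat.totient (d * (n + l * h))}.Infinite := by
  intro d hd
  obtain ⟨i, j, hij, hS⟩ := maynard (fun k : Fin 50 => (k : ℕ) * d + 1)
    (fun k => by positivity)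
    (by
      intro x y hxy
      simp only at hxy
      have h1 : (x : ℕ) * d = (y : ℕ) * d := by omega
      exact Fin.ext (Nat.eq_of_mul_eq_mul_right (by omega) h1))
    (by
      rintro ⟨p, hp, hall⟩
      have h0 := hall 0
      simp [Nat.dvd_one] at h0
      exact hp.ne_one h0)

  have hne : (i : ℕ) ≠ (j : ℕ) := fun h => hij (Fin.ext h)
  rcases Nat.lt_or_ge (i : ℕ) (j : ℕ) with hlt | hge
  · obtain ⟨t, ht⟩ := Nat.exists_eq_add_of_lt hlt
    refine key d i t hd (by have := j.isLt; omega) ?_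
    rw [← ht]
    exact hS
  · have hlt : (j : ℕ) < (i : ℕ) := by omega
    obtain ⟨t, ht⟩ := Nat.exists_eq_add_of_lt hlt
    refine key d j t hd (by have := i.isLt; omega) ?_
    rw [← ht]
    exact Set.Infinite.mono (fun n hn => ⟨hn.2, hn.1⟩) hS
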